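/- (Theorem 3.3(ii); full high-energy expansion of the scattering amplitude, d=2.) For every M ∈ ℕ there exist constants C > 0 and κ₀ > 1 such that for all κ ≥ κ₀ the matrix A(κ) is invertible and for all k, ℓ ∈ ℝ² with |k| = |ℓ| = κ one has |f(k,ℓ) + (2π ln κ)^{−1} Σ_{m=0}^M (−2π)^m (ln κ)^{−m} Σ_{j=1}^n (α_j − i/4)^m e^{i(k−ℓ)·y_j}| ≤ C (ln κ)^{−M−2}. -/

import Mathlib

open Complex Finset Matrix

noncomputable section

/-- The matrix `A(κ) = (ln κ/(2π)) I + Z + G(κ)` for a two-dimensional multipoint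
potential, where `Z = diag(α_j - i/4)`. -/
def A2 (n : ℕ) (α : Fin n → ℂ) (G : ℝ → Matrix (Fin n) (Fin n) ℂ) (κ : ℝ) :
    Matrix (Fin n) (Fin n) ℂ :=
  ((Real.log κ / (2 * Real.pi) : ℝ) : ℂ) • (1 : Matrix (Fin n) (Fin n) ℂ) +
    Matrix.diagonal (fun j => α j - Complex.I / 4) + G κ

/-- `q(k) = A(κ)⁻¹ b(k)` with `b(k)_j = -e^{i k·y_j}`. -/
def q2 (n : ℕ) (y : Fin n → EuclideanSpace ℝ (Fin 2)) (α : Fin n → ℂ)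
    (G : ℝ → Matrix (Fin n) (Fin n) ℂ) (κ : ℝ) (k : EuclideanSpace ℝ (Fin 2)) :
    Fin n → ℂ :=
  (A2 n α G κ)⁻¹ *ᵥ fun j => -Complex.exp (Complex.I * (inner ℝ k (y j) : ℝ))

/-- The scattering amplitude `f(k,ℓ) = (2π)⁻² Σ_j q_j(k) e^{-iℓ·y_j}`. -/
def f2 (n : ℕ) (y : Fin n → EuclideanSpace ℝ (Fin 2)) (α : Fin n → ℂ)
    (G : ℝ → Matrix (Fin n) (Fin n) ℂ) (κ : ℝ) (k ℓ : EuclideanSpace ℝ (Fin 2)) : ℂ :=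
  ((2 * Real.pi : ℂ) ^ 2)⁻¹ *
    ∑ j, q2 n y α G κ k j * Complex.exp (-Complex.I * (inner ℝ ℓ (y j) : ℝ))

/-!
Write `t = ln κ / (2π)` and `A(κ) = D + G(κ)` with `D = diag(t + z_j)`, `z_j = α_j - i/4`.
Once `t ≥ 2 |z_j|`, each `(t + z_j)⁻¹` is the geometric series `t⁻¹ Σ_m (-z_j/t)^m`; its first
`M + 1` terms give exactly the expansion of the theorem, with remainder `O(t^{-M-2})`.
The off-diagonal part has `‖G(κ)‖ = O(κ^{-1/2})`, so by the resolvent identity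
`A⁻¹ - D⁻¹ = -D⁻¹ G A⁻¹` it moves the inverse only by `O(κ^{-1/2} t^{-2})`, which is smaller than
any power of `1 / ln κ`. The amplitude is a bilinear form of `A⁻¹` evaluated on unimodular
vectors, so the matrix bound (in the `ℓ^∞` operator norm) carries over to it.
-/

open Filter

theorem half_norm_le_norm_add {E : Type*} [SeminormedAddCommGroup E] {t z : E}
    (hz : 2 * ‖z‖ ≤ ‖t‖) : ‖t‖ / 2 ≤ ‖t + z‖ := by
  have := norm_sub_norm_le t (-z)
  rw [norm_neg, sub_neg_eq_add] at this
  linarith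

theorem norm_inv_add_sub_geom_sum_le {𝕜 : Type*} [NormedField 𝕜] {t z : 𝕜} (ht : t ≠ 0)
    (hz : 2 * ‖z‖ ≤ ‖t‖) (N : ℕ) :
    ‖(t + z)⁻¹ - t⁻¹ * ∑ m ∈ range N, (-(z / t)) ^ m‖ ≤ 2 * ‖z‖ ^ N / ‖t‖ ^ (N + 1) := by
  have htz := half_norm_le_norm_add hz
  have htz0 : t + z ≠ 0 := norm_pos_iff.mp (by linarith [norm_pos_iff.mpr ht])
  have key : (t + z)⁻¹ - t⁻¹ * ∑ m ∈ range N, (-(z / t)) ^ m = (-(z / t)) ^ N / (t + z) := by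
    have hgeom : (t⁻¹ * ∑ m ∈ range N, (-(z / t)) ^ m) * (t + z) = 1 - (-(z / t)) ^ N := by
      rw [← mul_neg_geom_sum, sub_neg_eq_add]
      field_simp
    rw [eq_div_iff htz0, sub_mul, inv_mul_cancel₀ htz0, hgeom, sub_sub_cancel]
  calc ‖(t + z)⁻¹ - t⁻¹ * ∑ m ∈ range N, (-(z / t)) ^ m‖
      = ‖z‖ ^ N / (‖t‖ ^ N * ‖t + z‖) := by
        rw [key, norm_div, norm_pow, norm_neg, norm_div, div_pow, div_div]
    _ ≤ ‖z‖ ^ N / (‖t‖ ^ N * (‖t‖ / 2)) := by gcongr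
    _ = 2 * ‖z‖ ^ N / ‖t‖ ^ (N + 1) := by field_simp; ring

section Perturbation

variable {R : Type*} [NormedRing R]

theorem Units.isUnit_add_of_norm_inv_mul_lt [HasSummableGeomSeries R] (u : Rˣ) {g : R}
    (h : ‖(↑u⁻¹ : R)‖ * ‖g‖ < 1) : IsUnit ((u : R) + g) := by
  have hsmall : ‖-(↑u⁻¹ * g)‖ < 1 := by
    rw [norm_neg]
    exact (norm_mul_le _ _).trans_lt h
  have hfac : (u : R) + g = u * (1 - -(↑u⁻¹ * g)) := by
    rw [sub_neg_eq_add, mul_add, mul_one, ← mul_assoc, Units.mul_inv, one_mul]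
  rw [hfac]
  exact u.isUnit.mul (Units.oneSub _ hsmall).isUnit

theorem Units.norm_inverse_add_sub_inv_le (u : Rˣ) {g : R} (hunit : IsUnit ((u : R) + g))
    {a b : ℝ} (ha : ‖(↑u⁻¹ : R)‖ ≤ a) (hg : ‖g‖ ≤ b) (hab : 2 * a * b ≤ 1) :
    ‖Ring.inverse ((u : R) + g) - ↑u⁻¹‖ ≤ 2 * a ^ 2 * b := by
  set B := Ring.inverse ((u : R) + g)
  have hB : B - ↑u⁻¹ = -(↑u⁻¹ * g * B) := by
    have h := congrArg ((↑u⁻¹ : R) * ·) (Ring.mul_inverse_cancel _ hunit)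
    simp only [← mul_assoc, mul_add, Units.inv_mul, add_mul, one_mul, mul_one] at h
    nth_rewrite 1 [← h]
    abel
  have ha0 : 0 ≤ a := (norm_nonneg _).trans ha
  have hb0 : 0 ≤ b := (norm_nonneg _).trans hg
  have hdiff : ‖B - ↑u⁻¹‖ ≤ a * b * ‖B‖ := by
    rw [hB, norm_neg]
    calc ‖↑u⁻¹ * g * B‖ ≤ ‖(↑u⁻¹ : R)‖ * ‖g‖ * ‖B‖ := norm_mul₃_le
      _ ≤ a * b * ‖B‖ := by gcongr
  -- `‖B‖ ≤ ‖u⁻¹‖ + ‖B - u⁻¹‖ ≤ a + ‖B‖ / 2`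
  have hBle : ‖B‖ ≤ 2 * a := by
    have := norm_sub_norm_le B ↑u⁻¹
    nlinarith [norm_nonneg B]
  calc ‖B - ↑u⁻¹‖ ≤ a * b * (2 * a) := hdiff.trans (by gcongr)
    _ = 2 * a ^ 2 * b := by ring

end Perturbation

theorem norm_dotProduct_le {ι α : Type*} [Fintype ι] [NonUnitalSeminormedRing α] (x v : ι → α) :
    ‖x ⬝ᵥ v‖ ≤ Fintype.card ι * (‖x‖ * ‖v‖) := by
  calc ‖x ⬝ᵥ v‖ ≤ ∑ i, ‖x i‖ * ‖v i‖ := norm_sum_le_of_le _ fun i _ => norm_mul_le _ _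
    _ ≤ ∑ _i : ι, ‖x‖ * ‖v‖ := by
        gcongr with i
        exacts [norm_le_pi_norm x i, norm_le_pi_norm v i]
    _ = Fintype.card ι * (‖x‖ * ‖v‖) := by rw [sum_const, card_univ, nsmul_eq_mul]

attribute [local instance] Matrix.linftyOpSeminormedAddCommGroup Matrix.linftyOpNormedRing
  Matrix.linftyOpNormedAlgebra

namespace Matrix

theorem linfty_opNorm_le_card_mul {m n α : Type*} [Fintype m] [Fintype n]
    [SeminormedAddCommGroup α] {A : Matrix m n α} {b : ℝ} (hb : 0 ≤ b)
    (h : ∀ i j, ‖A i j‖ ≤ b) : ‖A‖ ≤ Fintype.card n * b := by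
  rw [linfty_opNorm_def, ← NNReal.coe_mk _ (mul_nonneg (Nat.cast_nonneg (Fintype.card n)) hb),
    NNReal.coe_le_coe]
  refine Finset.sup_le fun i _ => ?_
  rw [← NNReal.coe_le_coe, NNReal.coe_sum]
  simpa using Finset.sum_le_sum fun j (_ : j ∈ univ) => h i j

theorem isUnit_diagonal_add_and_norm_inv_sub_le {ι 𝕜 : Type*} [Fintype ι] [DecidableEq ι]
    [RCLike 𝕜] {d : ι → 𝕜} {G : Matrix ι ι 𝕜} {r b : ℝ} (hr : 0 < r) (hd : ∀ i, r ≤ ‖d i‖)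
    (hG : ‖G‖ ≤ b) (hbr : 2 * b ≤ r) :
    IsUnit (diagonal d + G) ∧ ‖(diagonal d + G)⁻¹ - diagonal d⁻¹‖ ≤ 2 * b / r ^ 2 := by
  have hd0 : ∀ i, d i ≠ 0 := fun i => norm_pos_iff.mp (hr.trans_le (hd i))
  let u : (Matrix ι ι 𝕜)ˣ :=
    ⟨diagonal d, diagonal d⁻¹, by simp [diagonal_mul_diagonal, hd0],
      by simp [diagonal_mul_diagonal, hd0]⟩
  have hu : ‖(↑u⁻¹ : Matrix ι ι 𝕜)‖ ≤ r⁻¹ := by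
    change ‖diagonal d⁻¹‖ ≤ r⁻¹
    rw [linfty_opNorm_diagonal, pi_norm_le_iff_of_nonneg (inv_nonneg.mpr hr.le)]
    intro i
    rw [Pi.inv_apply, norm_inv]
    exact inv_anti₀ hr (hd i)
  have hab : 2 * r⁻¹ * b ≤ 1 := by
    rw [mul_comm 2, mul_assoc, inv_mul_le_one₀ hr]
    exact hbr
  have : CompleteSpace (Matrix ι ι 𝕜) := FiniteDimensional.complete 𝕜 _
  have hunit : IsUnit ((u : Matrix ι ι 𝕜) + G) :=
    u.isUnit_add_of_norm_inv_mul_lt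
      (by nlinarith [norm_nonneg (↑u⁻¹ : Matrix ι ι 𝕜), norm_nonneg G])
  refine ⟨hunit, ?_⟩
  have := u.norm_inverse_add_sub_inv_le hunit hu hG hab
  rwa [inv_pow, ← div_eq_mul_inv, div_mul_eq_mul_div, ← nonsing_inv_eq_ringInverse] at this

end Matrix

def logScale (κ : ℝ) : ℝ := Real.log κ / (2 * Real.pi)

def zDiag {n : ℕ} (α : Fin n → ℂ) : Fin n → ℂ := fun j => α j - I / 4

def planeWave {n : ℕ} (y : Fin n → EuclideanSpace ℝ (Fin 2)) (k : EuclideanSpace ℝ (Fin 2)) :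
    Fin n → ℂ :=
  fun j => exp (I * (inner ℝ k (y j) : ℝ))

def truncInvSeries {ι : Type*} (t : ℂ) (z : ι → ℂ) (N : ℕ) : ι → ℂ :=
  fun j => t⁻¹ * ∑ m ∈ range N, (-(z j / t)) ^ m

def amplitudeExpansion (n : ℕ) (y : Fin n → EuclideanSpace ℝ (Fin 2)) (α : Fin n → ℂ) (κ : ℝ)
    (M : ℕ) (k ℓ : EuclideanSpace ℝ (Fin 2)) : ℂ :=
  ((2 * Real.pi * Real.log κ : ℝ) : ℂ)⁻¹ *
    ∑ m ∈ Finset.range (M + 1),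
      (-2 * Real.pi : ℂ) ^ m / (Real.log κ : ℂ) ^ m *
        ∑ j, (α j - Complex.I / 4) ^ m *
          Complex.exp (Complex.I * (inner ℝ (k - ℓ) (y j) : ℝ))

theorem tendsto_logScale_atTop : Tendsto logScale atTop atTop :=
  Real.tendsto_log_atTop.atTop_div_const (by positivity)

theorem eventually_logScale_pow_le_sqrt (M : ℕ) :
    ∀ᶠ κ in atTop, logScale κ ^ M ≤ √κ := by
  have h := (isLittleO_log_rpow_rpow_atTop (M : ℝ) one_half_pos).bound
    (pow_pos Real.two_pi_pos M)
  filter_upwards [h, eventually_ge_atTop 1] with κ hκ h1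
  rw [Real.rpow_natCast, Real.norm_of_nonneg (pow_nonneg (Real.log_nonneg h1) M),
    ← Real.sqrt_eq_rpow, Real.norm_of_nonneg (Real.sqrt_nonneg _)] at hκ
  rw [logScale, div_pow, div_le_iff₀ (by positivity)]
  linarith

section Amplitude

variable {n : ℕ} (y : Fin n → EuclideanSpace ℝ (Fin 2)) (α : Fin n → ℂ)
  (G : ℝ → Matrix (Fin n) (Fin n) ℂ)

theorem A2_eq_diagonal_add (κ : ℝ) :
    A2 n α G κ = diagonal (fun j => (logScale κ : ℂ) + zDiag α j) + G κ := by
  rw [A2, smul_one_eq_diagonal, diagonal_add]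
  rfl

theorem norm_planeWave_le (k : EuclideanSpace ℝ (Fin 2)) : ‖planeWave y k‖ ≤ 1 :=
  (pi_norm_le_iff_of_nonneg zero_le_one).mpr fun j => by
    rw [planeWave, mul_comm, norm_exp_ofReal_mul_I]

theorem f2_eq (κ : ℝ) (k ℓ : EuclideanSpace ℝ (Fin 2)) :
    f2 n y α G κ k ℓ =
      -((2 * Real.pi : ℂ) ^ 2)⁻¹ * (((A2 n α G κ)⁻¹ *ᵥ planeWave y k) ⬝ᵥ planeWave y (-ℓ)) := by
  have hb : (fun j => -exp (I * (inner ℝ k (y j) : ℝ))) = -planeWave y k := rfl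
  rw [f2, q2, hb, mulVec_neg, dotProduct, neg_mul, ← mul_neg, ← sum_neg_distrib]
  simp only [planeWave, Pi.neg_apply, inner_neg_left, ofReal_neg, mul_neg, neg_mul]

theorem amplitudeExpansion_eq {κ : ℝ} (hκ : Real.log κ ≠ 0) (M : ℕ)
    (k ℓ : EuclideanSpace ℝ (Fin 2)) :
    amplitudeExpansion n y α κ M k ℓ = ((2 * Real.pi : ℂ) ^ 2)⁻¹ *
      ((diagonal (truncInvSeries (logScale κ) (zDiag α) (M + 1)) *ᵥ planeWave y k) ⬝ᵥ
        planeWave y (-ℓ)) := by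
  simp only [amplitudeExpansion, truncInvSeries, planeWave, mulVec_diagonal, dotProduct,
    inner_sub_left, inner_neg_left, zDiag, logScale, Finset.mul_sum, Finset.sum_mul]
  rw [Finset.sum_comm]
  refine Finset.sum_congr rfl fun j _ => Finset.sum_congr rfl fun m _ => ?_
  have hπ : (Real.pi : ℂ) ≠ 0 := ofReal_ne_zero.mpr Real.pi_ne_zero
  have hL : (Real.log κ : ℂ) ≠ 0 := ofReal_ne_zero.mpr hκ
  have hexp : ∀ a b : ℝ, exp (I * (a - b : ℝ)) = exp (I * a) * exp (I * (-b : ℝ)) := by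
    intro a b
    rw [← exp_add]
    push_cast
    ring_nf
  rw [hexp]
  push_cast
  field_simp
  rw [← mul_pow, ← mul_pow]
  congr 1
  field_simp

theorem norm_f2_add_amplitudeExpansion_le {κ : ℝ} (hκ : Real.log κ ≠ 0) (M : ℕ)
    (k ℓ : EuclideanSpace ℝ (Fin 2)) :
    ‖f2 n y α G κ k ℓ + amplitudeExpansion n y α κ M k ℓ‖ ≤
      n * ‖(A2 n α G κ)⁻¹ - diagonal (truncInvSeries (logScale κ) (zDiag α) (M + 1))‖ /
        (2 * Real.pi) ^ 2 := by
  rw [f2_eq, amplitudeExpansion_eq y α hκ, neg_mul, neg_add_eq_sub, ← neg_sub, norm_neg,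
    ← mul_sub, ← sub_dotProduct, ← sub_mulVec, norm_mul, norm_inv, norm_pow, norm_mul,
    Complex.norm_ofNat, norm_real, Real.norm_of_nonneg Real.pi_pos.le, inv_mul_eq_div]
  gcongr
  set E := (A2 n α G κ)⁻¹ - diagonal (truncInvSeries (logScale κ) (zDiag α) (M + 1))
  have hE : ‖E *ᵥ planeWave y k‖ ≤ ‖E‖ :=
    (linfty_opNorm_mulVec _ _).trans
      (mul_le_of_le_one_right (norm_nonneg _) (norm_planeWave_le y k))
  calc ‖(E *ᵥ planeWave y k) ⬝ᵥ planeWave y (-ℓ)‖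
      ≤ n * (‖E *ᵥ planeWave y k‖ * ‖planeWave y (-ℓ)‖) := by
        simpa using norm_dotProduct_le (E *ᵥ planeWave y k) (planeWave y (-ℓ))
    _ ≤ n * (‖E‖ * 1) := by gcongr; exact norm_planeWave_le y _
    _ = n * ‖E‖ := by rw [mul_one]

variable {G} in
theorem norm_G_le (hGdiag : ∀ κ : ℝ, 1 ≤ κ → ∀ j, G κ j j = 0) {c : ℝ} (hc : 0 < c)
    (hG : ∀ κ : ℝ, 1 ≤ κ → ∀ j j' : Fin n, j ≠ j' → ‖G κ j j'‖ ≤ c / Real.sqrt κ)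
    {κ : ℝ} (hκ : 1 ≤ κ) : ‖G κ‖ ≤ n * (c / √κ) := by
  simpa using linfty_opNorm_le_card_mul (A := G κ) (by positivity) fun i j => by
    rcases eq_or_ne i j with rfl | hij
    · rw [hGdiag κ hκ i, norm_zero]
      positivity
    · exact hG κ hκ i j hij

variable {G} in
theorem isUnit_A2_and_norm_inv_sub_le (hGdiag : ∀ κ : ℝ, 1 ≤ κ → ∀ j, G κ j j = 0) {c : ℝ}
    (hc : 0 < c) (hG : ∀ κ : ℝ, 1 ≤ κ → ∀ j j' : Fin n, j ≠ j' → ‖G κ j j'‖ ≤ c / Real.sqrt κ)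
    {κ : ℝ} (hκ : 1 ≤ κ) {M : ℕ} (hz : 2 * ‖zDiag α‖ < logScale κ)
    (hGt : 4 * n * c ≤ logScale κ * √κ) (hpow : logScale κ ^ M ≤ √κ) :
    IsUnit (A2 n α G κ) ∧
      ‖(A2 n α G κ)⁻¹ - diagonal (truncInvSeries (logScale κ) (zDiag α) (M + 1))‖ ≤
        (8 * n * c + 2 * ‖zDiag α‖ ^ (M + 1)) / logScale κ ^ (M + 2) := by
  set t := logScale κ
  set z := zDiag α
  have ht : 0 < t := lt_of_le_of_lt (by positivity) hz
  have htnorm : ‖(t : ℂ)‖ = t := by rw [norm_real, Real.norm_of_nonneg ht.le]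
  have hzj : ∀ j, 2 * ‖z j‖ ≤ ‖(t : ℂ)‖ := fun j => by
    rw [htnorm]
    linarith [norm_le_pi_norm z j]
  have hsqrt : 0 < √κ := Real.sqrt_pos.mpr (by linarith)
  obtain ⟨hunit, hpert⟩ := isUnit_diagonal_add_and_norm_inv_sub_le (half_pos ht)
    (fun j => htnorm ▸ half_norm_le_norm_add (hzj j)) (norm_G_le hGdiag hc hG hκ) (by
      rw [mul_div_assoc', ← mul_div_assoc, div_le_iff₀ hsqrt]
      linarith)
  rw [← A2_eq_diagonal_add] at hunit hpert
  have hser : ‖diagonal (fun j => (t : ℂ) + z j)⁻¹ - diagonal (truncInvSeries t z (M + 1))‖ ≤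
      2 * ‖z‖ ^ (M + 1) / t ^ (M + 2) := by
    rw [diagonal_sub, linfty_opNorm_diagonal, pi_norm_le_iff_of_nonneg (by positivity)]
    intro j
    calc _ ≤ 2 * ‖z j‖ ^ (M + 1) / ‖(t : ℂ)‖ ^ (M + 1 + 1) :=
          norm_inv_add_sub_geom_sum_le (ofReal_ne_zero.mpr ht.ne') (hzj j) (M + 1)
      _ ≤ _ := by
          rw [htnorm]
          gcongr
          exact norm_le_pi_norm z j
  refine ⟨hunit, ?_⟩
  calc _ ≤ 2 * (n * (c / √κ)) / (t / 2) ^ 2 + 2 * ‖z‖ ^ (M + 1) / t ^ (M + 2) :=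
        (norm_sub_le_norm_sub_add_norm_sub _ _ _).trans (add_le_add hpert hser)
    _ = 8 * n * c / (√κ * t ^ 2) + 2 * ‖z‖ ^ (M + 1) / t ^ (M + 2) := by
        field_simp
        ring
    _ ≤ 8 * n * c / (t ^ M * t ^ 2) + 2 * ‖z‖ ^ (M + 1) / t ^ (M + 2) := by gcongr
    _ = _ := by rw [← pow_add, add_comm M, ← add_div]

end Amplitude

theorem stmt4_general (n : ℕ) (y : Fin n → EuclideanSpace ℝ (Fin 2)) (α : Fin n → ℂ)
    (G : ℝ → Matrix (Fin n) (Fin n) ℂ)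
    (hGdiag : ∀ κ : ℝ, 1 ≤ κ → ∀ j, G κ j j = 0)
    (c : ℝ) (hc : 0 < c)
    (hG : ∀ κ : ℝ, 1 ≤ κ → ∀ j j' : Fin n, j ≠ j' → ‖G κ j j'‖ ≤ c / Real.sqrt κ) (M : ℕ) :
    ∃ C > (0 : ℝ), ∃ κ₀ > (1 : ℝ), ∀ κ ≥ κ₀, IsUnit (A2 n α G κ) ∧
      ∀ k ℓ : EuclideanSpace ℝ (Fin 2), ‖k‖ = κ → ‖ℓ‖ = κ →
        ‖f2 n y α G κ k ℓ +
            ((2 * Real.pi * Real.log κ : ℝ) : ℂ)⁻¹ *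
              ∑ m ∈ Finset.range (M + 1),
                (-2 * Real.pi : ℂ) ^ m / (Real.log κ : ℂ) ^ m *
                  ∑ j, (α j - Complex.I / 4) ^ m *
                    Complex.exp (Complex.I * (inner ℝ (k - ℓ) (y j) : ℝ))‖ ≤
          C / (Real.log κ) ^ (M + 2) := by
  set K := (2 * Real.pi) ^ M * (n * (8 * n * c + 2 * ‖zDiag α‖ ^ (M + 1))) with hK
  have hlarge : ∀ᶠ κ in atTop, 1 ≤ κ ∧ 2 * ‖zDiag α‖ < logScale κ ∧
      4 * n * c ≤ logScale κ * √κ ∧ logScale κ ^ M ≤ √κ :=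
    (eventually_ge_atTop 1).and <| (tendsto_logScale_atTop.eventually_gt_atTop _).and <|
      ((tendsto_logScale_atTop.atTop_mul_atTop₀ Real.tendsto_sqrt_atTop).eventually_ge_atTop
        _).and <| eventually_logScale_pow_le_sqrt M
  obtain ⟨κ₀, hκ₀⟩ := hlarge.exists_forall_of_atTop
  refine ⟨max K 1, by positivity, max κ₀ 2, by simp, fun κ hκ => ?_⟩
  obtain ⟨hκ1, hz, hGt, hpow⟩ := hκ₀ κ (le_of_max_le_left hκ)
  obtain ⟨hunit, hinv⟩ := isUnit_A2_and_norm_inv_sub_le α hGdiag hc hG hκ1 hz hGt hpow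
  have hL : 0 < Real.log κ := Real.log_pos (by linarith [le_of_max_le_right hκ])
  refine ⟨hunit, fun k ℓ _ _ => ?_⟩
  calc ‖f2 n y α G κ k ℓ + amplitudeExpansion n y α κ M k ℓ‖
      ≤ n * ‖(A2 n α G κ)⁻¹ - diagonal (truncInvSeries (logScale κ) (zDiag α) (M + 1))‖ /
        (2 * Real.pi) ^ 2 := norm_f2_add_amplitudeExpansion_le y α G hL.ne' M k ℓ
    _ ≤ n * ((8 * n * c + 2 * ‖zDiag α‖ ^ (M + 1)) / logScale κ ^ (M + 2)) /
        (2 * Real.pi) ^ 2 := by gcongr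
    _ = K / Real.log κ ^ (M + 2) := by
        rw [hK, logScale, div_pow]
        field_simp
        ring
    _ ≤ max K 1 / Real.log κ ^ (M + 2) := by gcongr; exact le_max_left K 1

/-- Theorem 3.3(ii): full high-energy expansion of the scattering amplitude, d = 2. -/
theorem stmt4 (n : ℕ) (y : Fin n → EuclideanSpace ℝ (Fin 2)) (α : Fin n → ℂ)
    (hy : Function.Injective y)
    (G : ℝ → Matrix (Fin n) (Fin n) ℂ)
    (hGdiag : ∀ κ : ℝ, 1 ≤ κ → ∀ j, G κ j j = 0)
    (c : ℝ) (hc : 0 < c)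
    (hG : ∀ κ : ℝ, 1 ≤ κ → ∀ j j' : Fin n, j ≠ j' → ‖G κ j j'‖ ≤ c / Real.sqrt κ) (M : ℕ) :
    ∃ C > (0 : ℝ), ∃ κ₀ > (1 : ℝ), ∀ κ ≥ κ₀, IsUnit (A2 n α G κ) ∧
      ∀ k ℓ : EuclideanSpace ℝ (Fin 2), ‖k‖ = κ → ‖ℓ‖ = κ →
        ‖f2 n y α G κ k ℓ +
            ((2 * Real.pi * Real.log κ : ℝ) : ℂ)⁻¹ *
              ∑ m ∈ Finset.range (M + 1),
                (-2 * Real.pi : ℂ) ^ m / (Real.log κ : ℂ) ^ m *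
                  ∑ j, (α j - Complex.I / 4) ^ m *
                    Complex.exp (Complex.I * (inner ℝ (k - ℓ) (y j) : ℝ))‖ ≤
          C / (Real.log κ) ^ (M + 2) :=
  stmt4_general n y α G hGdiag c hc hG M
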